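/- Let g be a finite simple graph, k a natural number, S ⊆ V(g), and let v_1, v_2, …, v_t be an enumeration of V(g)\S in non-decreasing order of |N̄_S(·)|. Let lb be an integer with lb ≥ |S|. Suppose the index i satisfies i > lb − |S| and |N̄_S(v_i)| > k − |Ē(S)| − ∑_{j=1}^{lb−|S|} |N̄_S(v_j)| (as integers). Then every k-defective clique C of g with S ∪ {v_i} ⊆ C ⊆ V(g) has |C| ≤ lb (correctness of the degree-sequence-based reduction rule RR3). -/

import Mathlib

open Finset

variable {V : Type*} [Fintype V] [DecidableEq V]

/-- The set of non-edges of `S`: unordered pairs of distinct vertices of `S`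
that are not adjacent in `G`. -/
def nonEdges (G : SimpleGraph V) [DecidableRel G.Adj] (S : Finset V) : Finset (Sym2 V) :=
  ((S ×ˢ S).filter fun p => p.1 ≠ p.2 ∧ ¬ G.Adj p.1 p.2).image fun p => s(p.1, p.2)

/-- The set of non-neighbors of `u` among `S \ {u}`. -/
def nonNbrs (G : SimpleGraph V) [DecidableRel G.Adj] (S : Finset V) (u : V) : Finset V :=
  (S.erase u).filter fun w => ¬ G.Adj u w

/-!
If `|C| > lb`, then `C \ S` consists of the vertex `v i` and at least `lb - |S|` further vertices
`v j`. Every non-neighbour in `S` of a vertex of `C \ S` gives a non-edge of `C` not inside `S`,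
and these are all distinct, so `|Ē(C)| ≥ |Ē(S)| + ∑_{u ∈ C \ S} |N̄_S(u)|`. Since the sequence
`|N̄_S(v j)|` is sorted, the `lb - |S|` vertices other than `v i` contribute at least the sum of the
first `lb - |S|` terms, and the hypothesis on `v i` then forces `|Ē(C)| > k`.
-/

section

variable {W : Type*} [DecidableEq W] {G : SimpleGraph W} [DecidableRel G.Adj] {S T C : Finset W}
  {u w x y : W}

lemma mem_nonEdges : s(x, y) ∈ nonEdges G S ↔ x ∈ S ∧ y ∈ S ∧ x ≠ y ∧ ¬ G.Adj x y := by
  simp only [nonEdges, mem_image, mem_filter, mem_product, Prod.exists, Sym2.eq, Sym2.rel_iff',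
    Prod.mk.injEq, Prod.swap_prod_mk]
  constructor
  · rintro ⟨a, b, ⟨⟨ha, hb⟩, hne, hadj⟩, ⟨rfl, rfl⟩ | ⟨rfl, rfl⟩⟩
    · exact ⟨ha, hb, hne, hadj⟩
    · exact ⟨hb, ha, hne.symm, fun h => hadj h.symm⟩
  · rintro ⟨hx, hy, hne, hadj⟩
    exact ⟨x, y, ⟨⟨hx, hy⟩, hne, hadj⟩, Or.inl ⟨rfl, rfl⟩⟩

lemma mem_nonNbrs : w ∈ nonNbrs G S u ↔ w ∈ S ∧ w ≠ u ∧ ¬ G.Adj u w := by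
  simp only [nonNbrs, mem_filter, mem_erase]
  tauto

lemma nonEdges_mono (h : S ⊆ C) : nonEdges G S ⊆ nonEdges G C := by
  intro e he
  induction e using Sym2.ind with
  | _ x y =>
    rw [mem_nonEdges] at he ⊢
    exact ⟨h he.1, h he.2.1, he.2.2⟩

/-- Each `u ∈ T` contributes the non-edges `s(u, w)`, `w ∈ N̄_S(u)`, which are distinct for
distinct pairs `(u, w)` and not inside `S`, because `T` and `S` are disjoint. -/
lemma card_nonEdges_add_sum_card_nonNbrs_le (hST : Disjoint S T) :
    (nonEdges G S).card + ∑ u ∈ T, (nonNbrs G S u).card ≤ (nonEdges G (S ∪ T)).card := by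
  set X := T.sigma (nonNbrs G S)
  set f : (Σ _ : W, W) → Sym2 W := fun p => s(p.1, p.2)
  have hmemX : ∀ {a b : W}, (⟨a, b⟩ : Σ _ : W, W) ∈ X ↔ a ∈ T ∧ b ∈ nonNbrs G S a :=
    mem_sigma
  have hinj : Set.InjOn f X := by
    rintro ⟨a, b⟩ hab ⟨c, d⟩ hcd hf
    rw [mem_coe, hmemX, mem_nonNbrs] at hab hcd
    rcases Sym2.eq_iff.mp hf with ⟨rfl, rfl⟩ | ⟨rfl, rfl⟩
    · rfl
    · exact (disjoint_left.mp hST hcd.2.1 hab.1).elim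
  have hdisj : Disjoint (nonEdges G S) (X.image f) := by
    refine disjoint_left.mpr fun e he hfe => ?_
    obtain ⟨⟨a, b⟩, hab, rfl⟩ := mem_image.mp hfe
    exact disjoint_left.mp hST (mem_nonEdges.mp he).1 (hmemX.mp hab).1
  have hsub : nonEdges G S ∪ X.image f ⊆ nonEdges G (S ∪ T) := by
    refine union_subset (nonEdges_mono subset_union_left) fun e hfe => ?_
    obtain ⟨⟨a, b⟩, hab, rfl⟩ := mem_image.mp hfe
    obtain ⟨ha, hbS, hba, hadj⟩ := (hmemX.trans (and_congr_right' mem_nonNbrs)).mp hab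
    exact mem_nonEdges.mpr ⟨mem_union_right _ ha, mem_union_left _ hbS, hba.symm, hadj⟩
  calc (nonEdges G S).card + ∑ u ∈ T, (nonNbrs G S u).card
      = (nonEdges G S).card + (X.image f).card := by rw [card_image_of_injOn hinj, card_sigma]
    _ = (nonEdges G S ∪ X.image f).card := (card_union_of_disjoint hdisj).symm
    _ ≤ (nonEdges G (S ∪ T)).card := card_le_card hsub

end

lemma Fin.sum_filter_lt_le_sum_of_monotone {t : ℕ} {f : Fin t → ℕ} (hf : Monotone f) :
    ∀ {r : ℕ} {J : Finset (Fin t)}, r ≤ J.card →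
      ∑ j ∈ univ.filter (fun j : Fin t => (j : ℕ) < r), f j ≤ ∑ j ∈ J, f j
  | 0, J, _ => by simp
  | r + 1, J, hJ => by
    have hJne : J.Nonempty := card_pos.mp (by omega)
    set M := J.max' hJne
    have hMJ : M ∈ J := J.max'_mem hJne
    have hrM : r ≤ (M : ℕ) := by
      have := card_le_card (show J ⊆ Iic M from fun j hj => mem_Iic.mpr (J.le_max' j hj))
      rw [Fin.card_Iic] at this
      omega
    set r' : Fin t := ⟨r, hrM.trans_lt M.isLt⟩
    have hsplit : univ.filter (fun j : Fin t => (j : ℕ) < r + 1)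
        = insert r' (univ.filter (fun j : Fin t => (j : ℕ) < r)) := by
      ext j
      simp only [mem_insert, mem_filter, mem_univ, true_and, r', Fin.ext_iff]
      omega
    rw [hsplit, sum_insert (by simp [r']), ← add_sum_erase J f hMJ]
    exact Nat.add_le_add (hf (Fin.le_def.mpr hrM))
      (sum_filter_lt_le_sum_of_monotone hf (by rw [card_erase_of_mem hMJ]; omega))

-- Indices are 0-based: `v j` is the paper's `v_{j+1}`.
theorem rr3_correct_general (G : SimpleGraph V) [DecidableRel G.Adj] (k : ℕ) (S : Finset V)
    {t : ℕ} (v : Fin t → V) (hinj : Function.Injective v)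
    (himg : Finset.image v Finset.univ = Finset.univ \ S)
    (hmono : ∀ j₁ j₂ : Fin t, j₁ ≤ j₂ →
      (nonNbrs G S (v j₁)).card ≤ (nonNbrs G S (v j₂)).card)
    (lb : ℕ) (i : Fin t)
    (hi2 : (k : ℤ) - ((nonEdges G S).card : ℤ)
        - ∑ j ∈ Finset.univ.filter (fun j : Fin t => (j : ℕ) < lb - S.card),
            ((nonNbrs G S (v j)).card : ℤ)
      < ((nonNbrs G S (v i)).card : ℤ))
    (C : Finset V) (hSC : insert (v i) S ⊆ C) (hC : (nonEdges G C).card ≤ k) :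
    C.card ≤ lb := by
  by_contra! hlt
  have hSC' : S ⊆ C := (subset_insert _ _).trans hSC
  set J := univ.filter fun j => v j ∈ C
  have hiJ : i ∈ J := mem_filter.mpr ⟨mem_univ i, hSC (mem_insert_self _ _)⟩
  have hJ : J.image v = C \ S := by
    ext u
    simp only [J, mem_image, mem_filter, mem_univ, true_and, mem_sdiff]
    constructor
    · rintro ⟨j, hj, rfl⟩
      exact ⟨hj, (mem_sdiff.mp (himg ▸ mem_image_of_mem v (mem_univ j))).2⟩
    · rintro ⟨hu, huS⟩
      obtain ⟨j, -, rfl⟩ := mem_image.mp (himg ▸ mem_sdiff.mpr ⟨mem_univ u, huS⟩)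
      exact ⟨j, hu, rfl⟩
  have hcount := card_nonEdges_add_sum_card_nonNbrs_le (G := G) (T := C \ S) disjoint_sdiff
  rw [union_sdiff_of_subset hSC', ← hJ, sum_image hinj.injOn] at hcount
  have hJcard : lb - S.card ≤ (J.erase i).card := by
    rw [card_erase_of_mem hiJ, ← card_image_of_injective J hinj, hJ, card_sdiff_of_subset hSC']
    omega
  have hsorted := Fin.sum_filter_lt_le_sum_of_monotone hmono hJcard
  rw [← add_sum_erase J _ hiJ] at hcount
  have hk := (Nat.cast_le (α := ℤ)).mpr (hcount.trans hC)
  have hsorted' := (Nat.cast_le (α := ℤ)).mpr hsorted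
  push_cast at hk hsorted'
  linarith

/-- Correctness of the degree-sequence-based reduction rule RR3: let
`v 0, v 1, …, v (t-1)` enumerate `V(g) \ S` in non-decreasing order of `|N̄_S(·)|`
(the index `i` here is 0-based, so position `i` corresponds to the 1-based index `i+1`).
If `i + 1 > lb − |S|` and `|N̄_S(v i)| > k − |Ē(S)| − ∑_{j ≤ lb−|S|} |N̄_S(v j)|`
(as integers), then every `k`-defective clique `C` with `S ∪ {v i} ⊆ C` has `|C| ≤ lb`. -/
theorem rr3_correct (G : SimpleGraph V) [DecidableRel G.Adj] (k : ℕ) (S : Finset V)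
    {t : ℕ} (v : Fin t → V) (hinj : Function.Injective v)
    (himg : Finset.image v Finset.univ = Finset.univ \ S)
    (hmono : ∀ j₁ j₂ : Fin t, j₁ ≤ j₂ →
      (nonNbrs G S (v j₁)).card ≤ (nonNbrs G S (v j₂)).card)
    (lb : ℕ) (hlb : S.card ≤ lb)
    (i : Fin t) (hi1 : lb - S.card < (i : ℕ) + 1)
    (hi2 : (k : ℤ) - ((nonEdges G S).card : ℤ)
        - ∑ j ∈ Finset.univ.filter (fun j : Fin t => (j : ℕ) < lb - S.card),
            ((nonNbrs G S (v j)).card : ℤ)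
      < ((nonNbrs G S (v i)).card : ℤ))
    (C : Finset V) (hSC : insert (v i) S ⊆ C) (hC : (nonEdges G C).card ≤ k) :
    C.card ≤ lb :=
  rr3_correct_general G k S v hinj himg hmono lb i hi2 C hSC hC
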